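/- If all formulas in X are true under valuation v, the question Q is sound under v (some direct answer of Q is true under v), and Q erotically implies Q1 on the basis of X, then Q1 is sound under v. -/
import Mathlib


inductive PForm where
  | atom : ℕ → PForm
  | neg : PForm → PForm
  | conj : PForm → PForm → PForm
  | disj : PForm → PForm → PForm
  | impl : PForm → PForm → PForm
deriving DecidableEq

def PForm.eval (v : ℕ → Bool) : PForm → Bool
  | .atom n => v n
  | .neg A => !(A.eval v)
  | .conj A B => A.eval v && B.eval v
  | .disj A B => A.eval v || B.eval v
  | .impl A B => !(A.eval v) || B.eval v

/-- Single-conclusion entailment. -/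
def scEnt (X : Set PForm) (B : PForm) : Prop :=
  ∀ v : ℕ → Bool, (∀ A ∈ X, A.eval v = true) → B.eval v = true

/-- Multiple-conclusion entailment. -/
def mcEnt (X Y : Set PForm) : Prop :=
  ∀ v : ℕ → Bool, (∀ A ∈ X, A.eval v = true) → ∃ B ∈ Y, B.eval v = true

/-- General erotetic implication. -/
def GenImp (dQ X dQ1 : Set PForm) : Prop :=
  (∀ A ∈ dQ, mcEnt (X ∪ {A}) dQ1) ∧
  (∀ B ∈ dQ1, ∃ Υ : Set PForm, Υ.Nonempty ∧ Υ ⊂ dQ ∧ mcEnt (X ∪ {B}) Υ)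

theorem soundness_transmits (v : ℕ → Bool) (X dQ dQ1 : Set PForm)
    (hX : ∀ A ∈ X, A.eval v = true)
    (hQ : ∃ A ∈ dQ, A.eval v = true)
    (hImp : GenImp dQ X dQ1) :
    ∃ B ∈ dQ1, B.eval v = true := by
  obtain ⟨A, hA, hAv⟩ := hQ
  apply hImp.1 A hA v
  intro C hC
  rcases hC with h | h
  · exact hX C h
  · simp at h; subst h; exact hAv
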